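/- Let V be a finite-dimensional complex vector space with dim V ≥ 4, equipped with a nondegenerate symmetric bilinear form B. Fix vectors f, k, τ ∈ V with B(f,f) = 0, B(k,f) ≠ 0, B(τ,τ) ≠ 0, and B(τ,k) = B(τ,f) = 0. Let W₀ be the span of f and k, and W₁ the span of f, k and τ. If P, P' : V × V → ℂ are polynomial maps, each invariant under the diagonal action of SO(V; f) (i.e. P(Tx,Ty) = P(x,y) and P'(Tx,Ty) = P'(x,y) for every T ∈ SO(V;f)), and if P(x,y) = P'(x,y) for all (x,y) ∈ W₀ × W₁, then P(x,y) = P'(x,y) for all (x,y) ∈ V × V. -/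

import Mathlib

/-!
Call `(x, y)` generic when `pairDiscr B f x y = B(x,f) · Q(B(x,f) y - B(y,f) x)` is nonzero.
For a generic pair some element of `SO(V; f)` moves `x` into `W₀` and `y` into `W₁`: an Eichler
transformation moves `x` into `W₀`; the component of `y` orthogonal to `W₀` is then anisotropic,
and, as in Witt's theorem, a product of two reflections in vectors orthogonal to `W₀` carries it
onto a multiple of `τ` (`dim V ≥ 4` provides an anisotropic vector orthogonal to `W₁`). Hence
`P = P'` on the generic locus. Both `P - P'` and `pairDiscr` are polynomial functions on `V × V`,
`pairDiscr` does not vanish at `(k, τ)`, and polynomial functions over an infinite field have no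
zero divisors, so `P = P'` everywhere.
-/

theorem LinearMap.det_preReflection {R M : Type*} [CommRing R] [AddCommGroup M] [Module R M]
    [Module.Free R M] [Module.Finite R M] (x : M) (φ : Module.Dual R M) :
    LinearMap.det (Module.preReflection x φ) = 1 - φ x := by
  classical
  let b := Module.Free.chooseBasis R M
  have hφx : (φ ∘ b) ⬝ᵥ (-b.repr x) = -φ x := by
    conv_rhs => rw [← b.sum_repr x, map_sum]
    simp only [dotProduct, Function.comp_apply, Pi.neg_apply, map_smul, smul_eq_mul, neg_mul,
      Finset.sum_neg_distrib, mul_comm]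
  rw [← LinearMap.det_toMatrix b, Module.preReflection, map_sub, LinearMap.toMatrix_id,
    LinearMap.toMatrix_smulRight, sub_eq_add_neg, ← Matrix.neg_vecMulVec,
    Matrix.vecMulVec_eq Unit, Matrix.det_one_add_replicateCol_mul_replicateRow, hφx,
    sub_eq_add_neg]

namespace LinearMap.BilinForm

variable {K V : Type*} [Field K] [AddCommGroup V] [Module K V] (B : LinearMap.BilinForm K V)

/-- The group `SO(V; f)` of the statement is `B.specialOrthogonalFixing {f}`. -/
def specialOrthogonalFixing (U : Set V) : Subgroup (V ≃ₗ[K] V) where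
  carrier := {T | B.IsOrthogonal T ∧ LinearMap.det (T : V →ₗ[K] V) = 1 ∧ ∀ u ∈ U, T u = u}
  mul_mem' := by
    rintro S T ⟨hS, hSdet, hSU⟩ ⟨hT, hTdet, hTU⟩
    refine ⟨fun x y => ?_, ?_, fun u hu => ?_⟩
    · rw [LinearEquiv.mul_apply, LinearEquiv.mul_apply, hS, hT]
    · rw [LinearEquiv.coe_toLinearMap_mul, map_mul, hSdet, hTdet, one_mul]
    · rw [LinearEquiv.mul_apply, hTU u hu, hSU u hu]
  one_mem' := ⟨fun _ _ => rfl, by simp, fun _ _ => rfl⟩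
  inv_mem' := by
    rintro T ⟨hT, hTdet, hTU⟩
    refine ⟨fun x y => ?_, ?_, fun u hu => ?_⟩
    · rw [← hT, LinearEquiv.coe_inv, T.apply_symm_apply, T.apply_symm_apply]
    · change LinearMap.det (T.symm : V →ₗ[K] V) = 1
      rw [LinearEquiv.det_coe_symm, hTdet, inv_one]
    · rw [LinearEquiv.coe_inv, T.symm_apply_eq, hTU u hu]

variable {B} in
theorem specialOrthogonalFixing_anti {U U' : Set V} (h : U ⊆ U') :
    B.specialOrthogonalFixing U' ≤ B.specialOrthogonalFixing U :=
  fun _ ⟨hT, hTdet, hTU⟩ => ⟨hT, hTdet, fun u hu => hTU u (h hu)⟩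

section Reflection

variable {B} {u : V} (hu : B u u ≠ 0)

def reflection : V ≃ₗ[K] V :=
  Module.reflection (x := u) (f := (2 / B u u) • B u) (by simp [hu])

theorem reflection_apply (x : V) : reflection hu x = x - (2 / B u u * B u x) • u := by
  simp [reflection, Module.reflection_apply]

theorem reflection_apply_of_eq_zero {x : V} (hx : B u x = 0) : reflection hu x = x := by
  simp [reflection_apply, hx]

theorem reflection_apply_self : reflection hu u = -u :=
  Module.reflection_apply_self _

theorem isOrthogonal_reflection (hB : B.IsSymm) : B.IsOrthogonal (reflection hu) := by
  intro x y
  simp only [reflection_apply, map_sub, map_smul, LinearMap.sub_apply, LinearMap.smul_apply,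
    smul_eq_mul, hB.eq x u]
  field_simp
  ring

theorem reflection_sub [CharZero K] (hB : B.IsSymm) {a b : V} (hab : B a a = B b b)
    (hu : B (a - b) (a - b) ≠ 0) : reflection hu a = b := by
  have h : B (a - b) a = B (a - b) (a - b) / 2 := by
    simp only [map_sub, LinearMap.sub_apply, hB.eq a b]
    linear_combination hab / 2
  rw [reflection_apply, h, div_mul_div_cancel₀ hu, div_self two_ne_zero, one_smul, sub_sub_cancel]

theorem det_reflection [FiniteDimensional K V] :
    LinearMap.det (reflection hu : V →ₗ[K] V) = -1 := by
  have h : (reflection hu : V →ₗ[K] V) = Module.preReflection u ((2 / B u u) • B u) := rfl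
  rw [h, LinearMap.det_preReflection, LinearMap.smul_apply, smul_eq_mul, div_mul_cancel₀ _ hu]
  norm_num

theorem reflection_mul_reflection_mem [FiniteDimensional K V] (hB : B.IsSymm)
    {W : Submodule K V} {u₁ u₂ : V} (hu₁ : B u₁ u₁ ≠ 0) (hu₂ : B u₂ u₂ ≠ 0)
    (hu₁W : u₁ ∈ W) (hu₂W : u₂ ∈ W) :
    reflection hu₂ * reflection hu₁ ∈ B.specialOrthogonalFixing (B.orthogonal W) := by
  refine ⟨fun x y => ?_, ?_, fun z hz => ?_⟩
  · rw [LinearEquiv.mul_apply, LinearEquiv.mul_apply, isOrthogonal_reflection hu₂ hB,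
      isOrthogonal_reflection hu₁ hB]
  · rw [LinearEquiv.coe_toLinearMap_mul, map_mul, det_reflection, det_reflection]
    norm_num
  · rw [LinearEquiv.mul_apply, reflection_apply_of_eq_zero hu₁ (hz u₁ hu₁W),
      reflection_apply_of_eq_zero hu₂ (hz u₂ hu₂W)]

theorem exists_mem_specialOrthogonalFixing_apply_eq [CharZero K] [FiniteDimensional K V]
    (hB : B.IsSymm) {W : Submodule K V} {a b v : V} (ha : a ∈ W) (hb : b ∈ W) (hv : v ∈ W)
    (hab : B a a = B b b) (hb0 : B b b ≠ 0) (hv0 : B v v ≠ 0) (hvb : B v b = 0) :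
    ∃ S ∈ B.specialOrthogonalFixing (B.orthogonal W), S a = b := by
  by_cases hsub : B (a - b) (a - b) = 0
  · have hadd : B (a - -b) (a - -b) ≠ 0 := by
      have h4 : B (a - -b) (a - -b) = 4 * B b b - B (a - b) (a - b) := by
        simp only [map_sub, map_neg, LinearMap.sub_apply, LinearMap.neg_apply, hB.eq a b]
        linear_combination 2 * hab
      rw [h4, hsub, sub_zero]
      exact mul_ne_zero (by norm_num) hb0
    refine ⟨reflection hb0 * reflection hadd,
      reflection_mul_reflection_mem hB hadd hb0 (sub_mem ha (neg_mem hb)) hb, ?_⟩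
    have hab' : B a a = B (-b) (-b) := by simpa using hab
    rw [LinearEquiv.mul_apply, reflection_sub hB hab' hadd, map_neg,
      reflection_apply_self, neg_neg]
  · refine ⟨reflection hv0 * reflection hsub,
      reflection_mul_reflection_mem hB hsub hv0 (sub_mem ha hb) hv, ?_⟩
    rw [LinearEquiv.mul_apply, reflection_sub hB hab hsub,
      reflection_apply_of_eq_zero hv0 hvb]

end Reflection

theorem det_sq_eq_one_of_isOrthogonal [FiniteDimensional K V] (hB : B.Nondegenerate)
    {T : V →ₗ[K] V} (hT : B.IsOrthogonal T) : LinearMap.det T ^ 2 = 1 := by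
  let b := Module.finBasis K V
  have hcomp : B.comp T T = B := by
    ext x y
    exact hT x y
  have hdet := congrArg (fun B' => (toMatrix b B').det) hcomp
  simp only [toMatrix_comp b b, Matrix.det_mul, Matrix.det_transpose, LinearMap.det_toMatrix]
    at hdet
  have hG : (toMatrix b B).det ≠ 0 := (nondegenerate_iff_det_ne_zero b).mp hB
  exact mul_right_cancel₀ hG (by linear_combination hdet)

section Eichler

def eichler (f w : V) : V →ₗ[K] V :=
  LinearMap.id + (B w).smulRight f - (B f).smulRight w - ((B w w / 2) • B f).smulRight f

theorem eichler_apply (f w x : V) :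
    B.eichler f w x = x + B w x • f - B f x • w - (B w w / 2 * B f x) • f := by
  simp [eichler]

variable {B} {f : V}

theorem eichler_zero : B.eichler f 0 = LinearMap.id := by
  ext x
  simp [eichler_apply]

theorem eichler_eichler [CharZero K] (hB : B.IsSymm) (hf : B f f = 0) {w w' : V}
    (hw : B w f = 0) (hw' : B w' f = 0) (x : V) :
    B.eichler f w' (B.eichler f w x) = B.eichler f (w + w') x := by
  simp only [eichler_apply, map_add, map_sub, map_smul, LinearMap.add_apply, hf, hB.eq f w, hw,
    hw']
  rw [hB.eq w' w]
  match_scalars <;> ring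

theorem isOrthogonal_eichler [CharZero K] (hB : B.IsSymm) (hf : B f f = 0) {w : V}
    (hw : B w f = 0) : B.IsOrthogonal (B.eichler f w) := by
  intro x y
  simp only [eichler_apply, map_add, map_sub, map_smul, LinearMap.add_apply, LinearMap.sub_apply,
    LinearMap.smul_apply, smul_eq_mul, hf, hB.eq f w, hw, hB.eq x f, hB.eq x w]
  ring

theorem det_eichler [CharZero K] [FiniteDimensional K V] (hB : B.IsSymm)
    (hnd : B.Nondegenerate) (hf : B f f = 0) {w : V} (hw : B w f = 0) :
    LinearMap.det (B.eichler f w) = 1 := by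
  have hw2 : B ((2⁻¹ : K) • w) f = 0 := by simp [hw]
  have hsq : B.eichler f w = B.eichler f ((2⁻¹ : K) • w) * B.eichler f ((2⁻¹ : K) • w) := by
    ext x
    rw [Module.End.mul_apply, eichler_eichler hB hf hw2 hw2, ← add_smul,
      show (2⁻¹ : K) + 2⁻¹ = 1 by norm_num, one_smul]
  rw [hsq, map_mul, ← sq]
  exact det_sq_eq_one_of_isOrthogonal B hnd (isOrthogonal_eichler hB hf hw2)

def eichlerEquiv [CharZero K] (hB : B.IsSymm) (hf : B f f = 0) {w : V} (hw : B w f = 0) :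
    V ≃ₗ[K] V :=
  LinearEquiv.ofLinearMap (B.eichler f w) (B.eichler f (-w))
    (by ext x; simp [eichler_eichler hB hf (w := -w) (by simp [hw]) hw, eichler_zero])
    (by ext x; simp [eichler_eichler hB hf hw (w' := -w) (by simp [hw]), eichler_zero])

theorem eichlerEquiv_mem [CharZero K] [FiniteDimensional K V] (hB : B.IsSymm)
    (hnd : B.Nondegenerate) (hf : B f f = 0) {w : V} (hw : B w f = 0) :
    eichlerEquiv hB hf hw ∈ B.specialOrthogonalFixing {f} :=
  ⟨isOrthogonal_eichler hB hf hw, det_eichler hB hnd hf hw,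
    by simp [eichlerEquiv, eichler_apply, hf, hw]⟩

theorem exists_eichler_apply_eq_add_smul (hB : B.IsSymm) {x b : V} (hx : B x f ≠ 0) :
    ∃ γ : K, B.eichler f ((B x f)⁻¹ • (x - b)) x = b + γ • f := by
  set w := (B x f)⁻¹ • (x - b)
  refine ⟨B w x - B w w / 2 * B x f, ?_⟩
  rw [eichler_apply, hB.eq f x, smul_smul, mul_inv_cancel₀ hx, one_smul]
  module

end Eichler

theorem exists_anisotropic_mem_orthogonal [CharZero K] [FiniteDimensional K V] (hB : B.IsSymm)
    (hnd : B.Nondegenerate) {U : Submodule K V} (hU : Disjoint U (B.orthogonal U))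
    (hlt : Module.finrank K U < Module.finrank K V) : ∃ v ∈ B.orthogonal U, B v v ≠ 0 := by
  by_contra! hiso
  have hself : B.orthogonal U ≤ B.orthogonal (B.orthogonal U) := fun w hw v hv => by
    have hvw := hiso (v + w) (add_mem hv hw)
    simp only [map_add, LinearMap.add_apply, hiso v hv, hiso w hw, hB.eq w v] at hvw
    linear_combination hvw / 2
  rw [orthogonal_orthogonal hnd hB.isRefl] at hself
  have hbot := hU.symm.eq_bot_of_le hself
  have hrank := finrank_orthogonal hnd U
  rw [hbot, finrank_bot] at hrank
  omega

def pairDiscr (f x y : V) : K := B x f * B (B x f • y - B y f • x) (B x f • y - B y f • x)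

variable {B} in
theorem pairDiscr_map {f : V} {T : V →ₗ[K] V} (hT : B.IsOrthogonal T) (hTf : T f = f)
    (x y : V) : B.pairDiscr f (T x) (T y) = B.pairDiscr f x y := by
  have hc : ∀ z, B (T z) f = B z f := fun z => by simpa [hTf] using hT z f
  have hv : B x f • T y - B y f • T x = T (B x f • y - B y f • x) := by simp
  rw [pairDiscr, pairDiscr, hc, hc, hv, hT]

section HyperbolicPair

variable {B} {f k τ : V}

theorem disjoint_span_pair_orthogonal (hB : B.IsSymm) (hf : B f f = 0) (hkf : B k f ≠ 0) :
    Disjoint (Submodule.span K {f, k}) (B.orthogonal (Submodule.span K {f, k})) := by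
  rw [Submodule.disjoint_def]
  rintro _ hz hz'
  obtain ⟨a, b, rfl⟩ := Submodule.mem_span_pair.mp hz
  have hfz := hz' f (Submodule.subset_span (by simp))
  have hkz := hz' k (Submodule.subset_span (by simp))
  simp only [map_add, map_smul, smul_eq_mul, hf, hB.eq f k] at hfz hkz
  have hb : b = 0 := by simpa [hkf] using hfz
  subst hb
  have ha : a = 0 := by simpa [hkf] using hkz
  simp [ha]

theorem disjoint_span_triple_orthogonal (hB : B.IsSymm) (hf : B f f = 0) (hkf : B k f ≠ 0)
    (hτ : B τ τ ≠ 0) (hτk : B τ k = 0) (hτf : B τ f = 0) :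
    Disjoint (Submodule.span K {f, k, τ}) (B.orthogonal (Submodule.span K {f, k, τ})) := by
  rw [Submodule.disjoint_def]
  rintro _ hz hz'
  obtain ⟨a, b, c, rfl⟩ := Submodule.mem_span_triple.mp hz
  have hτz := hz' τ (Submodule.subset_span (by simp))
  simp only [map_add, map_smul, smul_eq_mul, hτf, hτk, mul_zero, zero_add] at hτz
  obtain rfl : c = 0 := by simpa [hτ] using hτz
  rw [zero_smul, add_zero] at hz' ⊢
  refine Submodule.disjoint_def.mp (disjoint_span_pair_orthogonal hB hf hkf) _
    (Submodule.mem_span_pair.mpr ⟨a, b, rfl⟩) (B.orthogonal_le ?_ hz')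
  exact Submodule.span_mono (by simp [Set.insert_subset_iff])

theorem apply_self_eq_zero_of_mem_span_pair (hf : B f f = 0) (hkf : B k f ≠ 0) {w : V}
    (hw : w ∈ Submodule.span K {f, k}) (hwf : B w f = 0) : B w w = 0 := by
  obtain ⟨a, b, rfl⟩ := Submodule.mem_span_pair.mp hw
  simp only [map_add, map_smul, LinearMap.add_apply, LinearMap.smul_apply, smul_eq_mul, hf,
    mul_zero, zero_add] at hwf
  obtain rfl : b = 0 := by simpa [hkf] using hwf
  simp [hf]

theorem pairDiscr_add_of_mem_orthogonal (hB : B.IsSymm) (hf : B f f = 0) (hkf : B k f ≠ 0)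
    {x h y₁ : V} (hx : x ∈ Submodule.span K {f, k}) (hh : h ∈ Submodule.span K {f, k})
    (hy₁ : y₁ ∈ B.orthogonal (Submodule.span K {f, k})) :
    B.pairDiscr f x (h + y₁) = B x f ^ 3 * B y₁ y₁ := by
  have hy₁f : B y₁ f = 0 := by rw [hB.eq]; exact hy₁ f (Submodule.subset_span (by simp))
  set w := B x f • h - B h f • x
  have hwW : w ∈ Submodule.span K {f, k} :=
    sub_mem (Submodule.smul_mem _ _ hh) (Submodule.smul_mem _ _ hx)
  have hwf : B w f = 0 := by simp [w]; ring
  have hww := apply_self_eq_zero_of_mem_span_pair hf hkf hwW hwf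
  have hwy₁ : B w y₁ = 0 := hy₁ w hwW
  have hv : B x f • (h + y₁) - B (h + y₁) f • x = B x f • y₁ + w := by
    simp only [map_add, LinearMap.add_apply, hy₁f, add_zero, w]
    module
  rw [pairDiscr, hv]
  simp only [map_add, map_smul, LinearMap.add_apply, LinearMap.smul_apply, smul_eq_mul, hww, hwy₁,
    hB.eq y₁ w]
  ring

theorem exists_mem_specialOrthogonalFixing_apply_mem_span_pair [CharZero K]
    [FiniteDimensional K V] (hB : B.IsSymm) (hnd : B.Nondegenerate) (hf : B f f = 0)
    (hkf : B k f ≠ 0) {x : V} (hx : B x f ≠ 0) :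
    ∃ E ∈ B.specialOrthogonalFixing {f}, E x ∈ Submodule.span K {f, k} := by
  set b := (B x f / B k f) • k
  have hw : B ((B x f)⁻¹ • (x - b)) f = 0 := by
    simp only [b, map_smul, map_sub, LinearMap.smul_apply, LinearMap.sub_apply, smul_eq_mul]
    field_simp
    ring
  obtain ⟨γ, hγ⟩ := exists_eichler_apply_eq_add_smul hB hx (b := b)
  refine ⟨eichlerEquiv hB hf hw, eichlerEquiv_mem hB hnd hf hw, ?_⟩
  change B.eichler f _ x ∈ _
  rw [hγ]
  exact add_mem (Submodule.smul_mem _ _ (Submodule.subset_span (by simp)))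
    (Submodule.smul_mem _ _ (Submodule.subset_span (by simp)))

theorem exists_mem_specialOrthogonalFixing_apply_mem_span_triple [IsAlgClosed K] [CharZero K]
    [FiniteDimensional K V] (hB : B.IsSymm) (hnd : B.Nondegenerate)
    (hdim : 4 ≤ Module.finrank K V) (hf : B f f = 0) (hkf : B k f ≠ 0) (hτ : B τ τ ≠ 0)
    (hτk : B τ k = 0) (hτf : B τ f = 0) {x y : V} (hx : x ∈ Submodule.span K {f, k})
    (hd : B.pairDiscr f x y ≠ 0) :
    ∃ S ∈ B.specialOrthogonalFixing (Submodule.span K {f, k}),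
      S y ∈ Submodule.span K {f, k, τ} := by
  classical
  set W₀ := Submodule.span K {f, k}
  set W₁ := Submodule.span K {f, k, τ}
  have hW : W₀ ≤ W₁ := Submodule.span_mono (by simp [Set.insert_subset_iff])
  have hy : y ∈ W₀ ⊔ B.orthogonal W₀ := by
    rw [((isCompl_orthogonal_iff_disjoint hB.isRefl).mpr
      (disjoint_span_pair_orthogonal hB hf hkf)).sup_eq_top]
    exact Submodule.mem_top
  obtain ⟨h, hh, y₁, hy₁, rfl⟩ := Submodule.mem_sup.mp hy
  rw [pairDiscr_add_of_mem_orthogonal hB hf hkf hx hh hy₁] at hd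
  have hy₁y₁ : B y₁ y₁ ≠ 0 := right_ne_zero_of_mul hd
  obtain ⟨μ, hμ⟩ := IsAlgClosed.exists_pow_nat_eq (B y₁ y₁ / B τ τ) two_pos
  have hμτ : B y₁ y₁ = B (μ • τ) (μ • τ) := by
    simp only [map_smul, LinearMap.smul_apply, smul_eq_mul, ← mul_assoc, ← sq, hμ]
    field_simp
  have hτW₀ : τ ∈ B.orthogonal W₀ := by
    intro n hn
    obtain ⟨a, b, rfl⟩ := Submodule.mem_span_pair.mp hn
    simp [hB.eq f τ, hB.eq k τ, hτf, hτk]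
  have hrank : Module.finrank K W₁ < Module.finrank K V := by
    refine lt_of_le_of_lt ((finrank_span_le_card ({f, k, τ} : Set V)).trans ?_) hdim
    simp only [Set.toFinset_insert, Set.toFinset_singleton]
    exact (Finset.card_insert_le _ _).trans (Nat.succ_le_succ Finset.card_le_two)
  obtain ⟨v, hv, hvv⟩ := exists_anisotropic_mem_orthogonal B hB hnd
    (disjoint_span_triple_orthogonal hB hf hkf hτ hτk hτf) hrank
  have hvτ : B v (μ • τ) = 0 := by
    rw [map_smul, hB.eq v τ, hv τ (Submodule.subset_span (by simp)), smul_zero]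
  obtain ⟨S, hS, hSy⟩ := exists_mem_specialOrthogonalFixing_apply_eq hB hy₁
    (Submodule.smul_mem _ μ hτW₀) (B.orthogonal_le hW hv) hμτ (hμτ ▸ hy₁y₁) hvv hvτ
  have hS₀ : S ∈ B.specialOrthogonalFixing W₀ :=
    specialOrthogonalFixing_anti (fun z hz => le_orthogonal_orthogonal hB.isRefl hz) hS
  refine ⟨S, hS₀, ?_⟩
  rw [map_add, hS₀.2.2 h hh, hSy]
  exact add_mem (hW hh) (Submodule.smul_mem _ _ (Submodule.subset_span (by simp)))

theorem exists_mem_specialOrthogonalFixing_apply_mem_spans [IsAlgClosed K] [CharZero K]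
    [FiniteDimensional K V] (hB : B.IsSymm) (hnd : B.Nondegenerate)
    (hdim : 4 ≤ Module.finrank K V) (hf : B f f = 0) (hkf : B k f ≠ 0) (hτ : B τ τ ≠ 0)
    (hτk : B τ k = 0) (hτf : B τ f = 0) {x y : V} (hd : B.pairDiscr f x y ≠ 0) :
    ∃ T ∈ B.specialOrthogonalFixing {f},
      T x ∈ Submodule.span K {f, k} ∧ T y ∈ Submodule.span K {f, k, τ} := by
  obtain ⟨E, hE, hEx⟩ := exists_mem_specialOrthogonalFixing_apply_mem_span_pair hB hnd hf hkf
    (left_ne_zero_of_mul hd)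
  rw [← pairDiscr_map hE.1 (hE.2.2 f rfl)] at hd
  obtain ⟨S, hS, hSy⟩ := exists_mem_specialOrthogonalFixing_apply_mem_span_triple hB hnd hdim
    hf hkf hτ hτk hτf hEx hd
  have hfW₀ : {f} ⊆ (Submodule.span K {f, k} : Set V) :=
    Set.singleton_subset_iff.mpr (Submodule.subset_span (by simp))
  refine ⟨S * E, mul_mem (specialOrthogonalFixing_anti hfW₀ hS) hE, ?_, hSy⟩
  rw [LinearEquiv.mul_apply, hS.2.2 _ hEx]
  exact hEx

end HyperbolicPair

end LinearMap.BilinForm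

namespace Module.Basis

variable {K M ι : Type*} [Field K] [AddCommGroup M] [Module K M] (b : Basis ι K M)

noncomputable def aevalCoord : MvPolynomial ι K →ₐ[K] (M → K) :=
  MvPolynomial.aeval fun i => ⇑(b.coord i)

noncomputable def polynomialFunctions : Subalgebra K (M → K) := b.aevalCoord.range

theorem aevalCoord_apply (p : MvPolynomial ι K) (m : M) :
    b.aevalCoord p m = MvPolynomial.eval (b.repr m) p := by
  induction p using MvPolynomial.induction_on <;> simp_all [aevalCoord]

theorem injective_aevalCoord [Fintype ι] [Infinite K] : Function.Injective b.aevalCoord := by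
  refine (injective_iff_map_eq_zero _).mpr fun p hp => MvPolynomial.funext fun x => ?_
  have hx : ⇑(b.repr (b.equivFun.symm x)) = x := b.equivFun.apply_symm_apply x
  have hpx := congrFun hp (b.equivFun.symm x)
  rwa [aevalCoord_apply, hx, Pi.zero_apply, ← map_zero (MvPolynomial.eval x)] at hpx

theorem coord_mem_polynomialFunctions (i : ι) : ⇑(b.coord i) ∈ b.polynomialFunctions :=
  ⟨MvPolynomial.X i, MvPolynomial.aeval_X _ _⟩

theorem dual_mem_polynomialFunctions [Fintype ι] (ℓ : Module.Dual K M) :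
    ⇑ℓ ∈ b.polynomialFunctions := by
  rw [← b.sum_dual_apply_smul_coord ℓ, LinearMap.coe_sum]
  refine sum_mem fun i _ => ?_
  rw [LinearMap.coe_smul]
  exact Subalgebra.smul_mem _ (b.coord_mem_polynomialFunctions i) _

theorem bilin_mem_polynomialFunctions [Fintype ι] {V : Type*} [AddCommGroup V] [Module K V]
    [FiniteDimensional K V] (β : LinearMap.BilinForm K V) (φ ψ : M →ₗ[K] V) :
    (fun m => β (φ m) (ψ m)) ∈ b.polynomialFunctions := by
  let c := Module.finBasis K V
  have hβ : (fun m => β (φ m) (ψ m)) = ∑ i, ⇑(c.coord i ∘ₗ φ) * ⇑(β (c i) ∘ₗ ψ) := by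
    ext m
    simp only [Finset.sum_apply, Pi.mul_apply, LinearMap.comp_apply, Basis.coord_apply]
    conv_lhs => rw [← c.sum_repr (φ m)]
    simp only [map_sum, map_smul, LinearMap.sum_apply, LinearMap.smul_apply, smul_eq_mul]
  rw [hβ]
  exact sum_mem fun i _ => mul_mem (b.dual_mem_polynomialFunctions _)
    (b.dual_mem_polynomialFunctions _)

theorem eval_sumElim_repr_mem_polynomialFunctions (p : MvPolynomial (ι ⊕ ι) K) :
    (fun z : M × M =>
      MvPolynomial.eval (Sum.elim (fun i => b.repr z.1 i) (fun i => b.repr z.2 i)) p)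
      ∈ (b.prod b).polynomialFunctions := by
  refine ⟨p, funext fun z => ?_⟩
  change (b.prod b).aevalCoord p z = _
  rw [aevalCoord_apply]
  congr

theorem eq_zero_of_apply_eq_zero_of_apply_ne_zero [Fintype ι] [Infinite K] {F G : M → K}
    (hF : F ∈ b.polynomialFunctions) (hG : G ∈ b.polynomialFunctions) (hG0 : G ≠ 0)
    (hFG : ∀ m, G m ≠ 0 → F m = 0) : F = 0 := by
  obtain ⟨p, rfl⟩ := hF
  obtain ⟨g, rfl⟩ := hG
  have hpg : b.aevalCoord (p * g) = b.aevalCoord 0 := by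
    ext m
    rw [map_mul, map_zero, Pi.mul_apply, Pi.zero_apply]
    by_cases hm : b.aevalCoord g m = 0
    · rw [hm, mul_zero]
    · rw [show b.aevalCoord p m = 0 from hFG m hm, zero_mul]
  rcases mul_eq_zero.mp (b.injective_aevalCoord hpg) with rfl | rfl
  · exact map_zero _
  · exact absurd (map_zero _) hG0

end Module.Basis

namespace LinearMap.BilinForm

variable {K V : Type*} [Field K] [AddCommGroup V] [Module K V] (B : LinearMap.BilinForm K V)

theorem pairDiscr_mem_polynomialFunctions [FiniteDimensional K V] {M ι : Type*} [AddCommGroup M]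
    [Module K M] [Fintype ι] (b : Module.Basis ι K M) (f : V) (φ ψ : M →ₗ[K] V) :
    (fun m => B.pairDiscr f (φ m) (ψ m)) ∈ b.polynomialFunctions := by
  have hc := b.dual_mem_polynomialFunctions (B.flip f ∘ₗ φ)
  have hd := b.dual_mem_polynomialFunctions (B.flip f ∘ₗ ψ)
  have hD : (fun m => B.pairDiscr f (φ m) (ψ m)) = ⇑(B.flip f ∘ₗ φ) *
      (⇑(B.flip f ∘ₗ φ) * ⇑(B.flip f ∘ₗ φ) * (fun m => B (ψ m) (ψ m))
        - ⇑(B.flip f ∘ₗ φ) * ⇑(B.flip f ∘ₗ ψ) * (fun m => B (ψ m) (φ m))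
        - ⇑(B.flip f ∘ₗ ψ) * ⇑(B.flip f ∘ₗ φ) * (fun m => B (φ m) (ψ m))
        + ⇑(B.flip f ∘ₗ ψ) * ⇑(B.flip f ∘ₗ ψ) * (fun m => B (φ m) (φ m))) := by
    ext m
    simp only [pairDiscr, map_sub, map_smul, LinearMap.sub_apply, LinearMap.smul_apply,
      smul_eq_mul, Pi.mul_apply, Pi.sub_apply, Pi.add_apply, LinearMap.comp_apply, flip_apply]
    ring
  rw [hD]
  have := b.bilin_mem_polynomialFunctions B
  exact mul_mem hc (add_mem (sub_mem (sub_mem (mul_mem (mul_mem hc hc) (this ψ ψ))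
    (mul_mem (mul_mem hc hd) (this ψ φ))) (mul_mem (mul_mem hd hc) (this φ ψ)))
    (mul_mem (mul_mem hd hd) (this φ φ)))

end LinearMap.BilinForm

open LinearMap.BilinForm

theorem stmt1 {V : Type*} [AddCommGroup V] [Module ℂ V] [FiniteDimensional ℂ V]
    (hdim : 4 ≤ Module.finrank ℂ V)
    (B : V →ₗ[ℂ] V →ₗ[ℂ] ℂ)
    (hBsymm : ∀ x y : V, B x y = B y x)
    (hBnd : ∀ x : V, (∀ y : V, B x y = 0) → x = 0)
    (f k τ : V)
    (hff : B f f = 0) (hkf : B k f ≠ 0) (hττ : B τ τ ≠ 0)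
    (hτk : B τ k = 0) (hτf : B τ f = 0)
    (P P' : V → V → ℂ)
    {ι : Type*} [Fintype ι] (bV : Module.Basis ι ℂ V)
    (p p' : MvPolynomial (ι ⊕ ι) ℂ)
    (hpoly : ∀ x y : V, P x y =
      MvPolynomial.eval (Sum.elim (fun i => bV.repr x i) (fun i => bV.repr y i)) p)
    (hpoly' : ∀ x y : V, P' x y =
      MvPolynomial.eval (Sum.elim (fun i => bV.repr x i) (fun i => bV.repr y i)) p')
    (hinv : ∀ T : V ≃ₗ[ℂ] V, (∀ x y : V, B (T x) (T y) = B x y) →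
      LinearMap.det (T : V →ₗ[ℂ] V) = 1 → T f = f → ∀ x y : V, P (T x) (T y) = P x y)
    (hinv' : ∀ T : V ≃ₗ[ℂ] V, (∀ x y : V, B (T x) (T y) = B x y) →
      LinearMap.det (T : V →ₗ[ℂ] V) = 1 → T f = f → ∀ x y : V, P' (T x) (T y) = P' x y)
    (hagree : ∀ x ∈ Submodule.span ℂ ({f, k} : Set V),
      ∀ y ∈ Submodule.span ℂ ({f, k, τ} : Set V), P x y = P' x y) :
    ∀ x y : V, P x y = P' x y := by
  have hB : IsSymm B := ⟨hBsymm⟩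
  have hnd : Nondegenerate B := .ofSeparatingLeft hBnd
  have hP : (fun z : V × V => P z.1 z.2 - P' z.1 z.2) ∈ (bV.prod bV).polynomialFunctions := by
    simp_rw [hpoly, hpoly']
    exact sub_mem (bV.eval_sumElim_repr_mem_polynomialFunctions p)
      (bV.eval_sumElim_repr_mem_polynomialFunctions p')
  have hkτ : pairDiscr B f k τ ≠ 0 := by
    simp only [pairDiscr, hτf, zero_smul, sub_zero, map_smul, LinearMap.smul_apply, smul_eq_mul]
    exact mul_ne_zero hkf (mul_ne_zero hkf (mul_ne_zero hkf hττ))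
  have hPP' := (bV.prod bV).eq_zero_of_apply_eq_zero_of_apply_ne_zero hP
    (pairDiscr_mem_polynomialFunctions B _ f (LinearMap.fst ℂ V V) (LinearMap.snd ℂ V V))
    (fun h => hkτ (congrFun h (k, τ))) fun z (hd : pairDiscr B f z.1 z.2 ≠ 0) => by
      obtain ⟨T, ⟨hT, hTdet, hTf⟩, hTx, hTy⟩ :=
        exists_mem_specialOrthogonalFixing_apply_mem_spans hB hnd hdim hff hkf hττ hτk hτf hd
      rw [← hinv T hT hTdet (hTf f rfl), ← hinv' T hT hTdet (hTf f rfl), hagree _ hTx _ hTy,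
        sub_self]
  exact fun x y => sub_eq_zero.mp (congrFun hPP' (x, y))
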